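/- Let j_mid be the rightmost index of the outermost (middle) guard-band in G = g(X, n₀, ξ), where |X| = 2^n. If n₀ ≥ log_{2^{-ξ}}((1-2^{-ξ})/2) and n ≥ n₀+1, then the number of data bits up to j_mid, which equals 2^{n-1}, is at least the number of guard-band bits up to j_mid, which equals (|G| - 2^n)/2 + ℓ_n/2. -/

import Mathlib

/-!
Writing `r = 2^(-ξ)`, each guard-band satisfies `ℓ_{m+1} ≤ 2^m r^m`, and unrolling the recursion
`|G_{m+1}| = 2 |G_m| + ℓ_{m+1}` above level `n₀` gives `|G_n| ≤ 2^n (1 + (1/2) ∑_{n₀ ≤ k < n} r^k)`.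
The hypothesis on `n₀` says `r^{n₀} ≤ (1 - r)/2`, so the geometric tail is at most `1/2`; hence
`|G_n| - 2^n ≤ 2^{n-1}/2`, while `ℓ_n ≤ 2^{n-1}`, and the count of guard-band bits is at most
`(3/4) 2^{n-1}`.
-/

/-- Guard-band length at level `m`: `ℓ_m = ⌊2^((1-ξ)(m-1))⌋`. -/
noncomputable def gbLen (ξ : ℝ) (m : ℕ) : ℕ := ⌊(2:ℝ) ^ ((1 - ξ) * ((m:ℝ) - 1))⌋₊

/-- Marker word of `g(X, n₀, ξ)` at level `n` (`true` = data bit, `false` = guard-band bit). -/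
noncomputable def gbMark (ξ : ℝ) (n₀ : ℕ) : ℕ → List Bool
  | 0 => List.replicate (2 ^ 0) true
  | (n + 1) =>
      if n + 1 ≤ n₀ then List.replicate (2 ^ (n + 1)) true
      else gbMark ξ n₀ n ++ List.replicate (gbLen ξ (n + 1)) false ++ gbMark ξ n₀ n

lemma gbLen_succ_le (ξ : ℝ) (m : ℕ) :
    (gbLen ξ (m + 1) : ℝ) ≤ 2 ^ m * ((2:ℝ) ^ (-ξ)) ^ m := by
  have hpow : (2:ℝ) ^ ((1 - ξ) * (((m + 1 : ℕ) : ℝ) - 1)) = 2 ^ m * ((2:ℝ) ^ (-ξ)) ^ m := by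
    have hbase : (2:ℝ) * 2 ^ (-ξ) = 2 ^ (1 - ξ) := by
      rw [sub_eq_add_neg, Real.rpow_add two_pos, Real.rpow_one]
    rw [← mul_pow, hbase, ← Real.rpow_mul_natCast (by norm_num)]
    push_cast
    ring_nf
  exact hpow ▸ Nat.floor_le (by positivity)

lemma length_gbMark_le (ξ : ℝ) (n₀ n : ℕ) :
    ((gbMark ξ n₀ n).length : ℝ) ≤
      2 ^ n + 2 ^ n / 2 * ∑ k ∈ Finset.Ico n₀ n, ((2:ℝ) ^ (-ξ)) ^ k := by
  induction n with
  | zero => simp [gbMark]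
  | succ n ih =>
    by_cases hlow : n + 1 ≤ n₀
    · simp [gbMark, hlow]
    · rw [gbMark, if_neg hlow, Finset.sum_Ico_succ_top (by omega)]
      simp only [List.length_append, List.length_replicate]
      push_cast
      rw [pow_succ, mul_div_cancel_right₀ _ two_ne_zero]
      linarith [gbLen_succ_le ξ n]

lemma geom_sum_Ico_le_half {r : ℝ} {n₀ : ℕ} (hr : 0 < r) (hn₀ : r ^ n₀ ≤ (1 - r) / 2) (n : ℕ) :
    ∑ k ∈ Finset.Ico n₀ n, r ^ k ≤ 1 / 2 := by
  have hr1 : r < 1 := by linarith [pow_pos hr n₀]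
  calc ∑ k ∈ Finset.Ico n₀ n, r ^ k ≤ r ^ n₀ / (1 - r) := geom_sum_Ico_le_of_lt_one hr.le hr1
    _ ≤ 1 / 2 := by rw [div_le_iff₀ (by linarith)]; linarith

theorem stmt2_general (ξ : ℝ) (n₀ n : ℕ)
    (hn₀ : (2:ℝ) ^ (-(ξ * (n₀:ℝ))) ≤ (1 - (2:ℝ) ^ (-ξ)) / 2)
    (hn : n₀ + 1 ≤ n) :
    (((gbMark ξ n₀ n).length : ℝ) - 2 ^ n) / 2 + (gbLen ξ n : ℝ) / 2 ≤ 2 ^ (n - 1) := by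
  set r : ℝ := (2:ℝ) ^ (-ξ)
  have hr : 0 < r := by positivity
  have hrn₀ : r ^ n₀ ≤ (1 - r) / 2 := by
    rwa [← Real.rpow_mul_natCast (by norm_num), neg_mul]
  have hr1 : r ≤ 1 := by linarith [pow_pos hr n₀]
  obtain ⟨m, rfl⟩ : ∃ m, n = m + 1 := ⟨n - 1, by omega⟩
  have hG := length_gbMark_le ξ n₀ (m + 1)
  have hS := geom_sum_Ico_le_half hr hrn₀ (m + 1)
  have hℓ : (gbLen ξ (m + 1) : ℝ) ≤ 2 ^ m :=
    (gbLen_succ_le ξ m).trans (mul_le_of_le_one_right (by positivity) (pow_le_one₀ hr.le hr1))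
  have hGS : (2:ℝ) ^ (m + 1) / 2 * ∑ k ∈ Finset.Ico n₀ (m + 1), r ^ k ≤ 2 ^ (m + 1) / 2 * (1 / 2) :=
    mul_le_mul_of_nonneg_left hS (by positivity)
  rw [Nat.add_sub_cancel]
  linarith [pow_succ (2:ℝ) m]

/-- Up to the right edge `j_mid` of the middle guard-band there are `2^(n-1)` data
bits and `(|G| - 2^n)/2 + ℓ_n/2` guard-band bits; the former is at least the latter. -/
theorem stmt2 (ξ : ℝ) (n₀ n : ℕ) (hξ : 0 < ξ)
    (hn₀ : (2:ℝ) ^ (-(ξ * (n₀:ℝ))) ≤ (1 - (2:ℝ) ^ (-ξ)) / 2)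
    (hn : n₀ + 1 ≤ n) :
    (((gbMark ξ n₀ n).length : ℝ) - 2 ^ n) / 2 + (gbLen ξ n : ℝ) / 2 ≤ 2 ^ (n - 1) :=
  stmt2_general ξ n₀ n hn₀ hn
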